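/- arXiv:1310.5498 — 3 statements merged into one kernel-verified Lean document; each statement's English description precedes it below -/
import Mathlib

section
/- Let μ₁ and μ₂ be probability measures on a measurable space (E, ℰ) with μ₂ absolutely continuous with respect to μ₁, and suppose that for some p > 1 and C > 1 one has ∫_E (dμ₂/dμ₁)^{p+1} dμ₁ ≤ C, where dμ₂/dμ₁ denotes the Radon–Nikodym derivative. Then (μ₁ ⊓ μ₂)(E) ≥ (1 − 1/p)·(1/(pC))^{1/(p−1)}. -/
/-!
Write `f = dμ₂/dμ₁`. For every threshold `M ≥ 1` one has pointwise
`f ≤ M · min 1 f + f ^ (p + 1) / M ^ p` (the second term takes over where `f > M`), and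
`∫ min 1 f dμ₁ ≤ (μ₁ ⊓ μ₂)(E)` because `min 1 f · μ₁` lies below both measures. Integrating gives
`1 ≤ M · (μ₁ ⊓ μ₂)(E) + C / M ^ p`, and the choice `M = (pC)^(1/(p-1))` makes `C / M ^ p ≤ 1 / p`.
-/

open MeasureTheory ENNReal

namespace ENNReal

theorem le_mul_min_one_add_rpow_add_one_div {a M : ℝ≥0∞} {p : ℝ} (hM : 1 ≤ M) (hp : 0 ≤ p) :
    a ≤ M * min 1 a + a ^ (p + 1) / M ^ p := by
  rcases le_or_gt a M with haM | hMa
  · refine le_add_right ?_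
    rcases le_total a 1 with ha1 | ha1
    · simpa [min_eq_right ha1] using mul_le_mul_left hM a
    · simpa [min_eq_left ha1] using haM
  · refine le_add_left ?_
    have hM0 : M ^ p ≠ 0 := (rpow_pos (one_pos.trans_le hM) hMa.ne_top).ne'
    rw [ENNReal.le_div_iff_mul_le (.inl hM0) (.inl (rpow_ne_top_of_nonneg hp hMa.ne_top)),
      rpow_add_of_nonneg _ _ hp zero_le_one, rpow_one, mul_comm]
    gcongr

end ENNReal

namespace MeasureTheory.Measure

variable {α : Type*} [MeasurableSpace α]

theorem withDensity_min_one_rnDeriv_le_inf (μ ν : Measure α) :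
    μ.withDensity (fun x => min 1 (ν.rnDeriv μ x)) ≤ μ ⊓ ν :=
  le_inf ((withDensity_mono (.of_forall fun _ => min_le_left _ _)).trans withDensity_one.le)
    ((withDensity_mono (.of_forall fun _ => min_le_right _ _)).trans (withDensity_rnDeriv_le ν μ))

theorem lintegral_min_one_rnDeriv_le_inf_univ (μ ν : Measure α) :
    ∫⁻ x, min 1 (ν.rnDeriv μ x) ∂μ ≤ (μ ⊓ ν) Set.univ := by
  simpa using withDensity_min_one_rnDeriv_le_inf μ ν Set.univ

theorem measure_univ_le_mul_inf_add_lintegral_rnDeriv_rpow_div {μ ν : Measure α}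
    [ν.HaveLebesgueDecomposition μ] (hνμ : ν ≪ μ) {M : ℝ≥0∞} (hM : 1 ≤ M) {p : ℝ} (hp : 0 ≤ p) :
    ν Set.univ ≤ M * (μ ⊓ ν) Set.univ + (∫⁻ x, ν.rnDeriv μ x ^ (p + 1) ∂μ) / M ^ p := by
  calc ν Set.univ = ∫⁻ x, ν.rnDeriv μ x ∂μ := (lintegral_rnDeriv hνμ).symm
    _ ≤ ∫⁻ x, M * min 1 (ν.rnDeriv μ x) + ν.rnDeriv μ x ^ (p + 1) / M ^ p ∂μ :=
      lintegral_mono fun _ => ENNReal.le_mul_min_one_add_rpow_add_one_div hM hp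
    _ = M * ∫⁻ x, min 1 (ν.rnDeriv μ x) ∂μ + (∫⁻ x, ν.rnDeriv μ x ^ (p + 1) ∂μ) / M ^ p := by
      simp only [div_eq_mul_inv]
      rw [lintegral_add_left (by fun_prop), lintegral_const_mul _ (by fun_prop),
        lintegral_mul_const _ (by fun_prop)]
    _ ≤ M * (μ ⊓ ν) Set.univ + (∫⁻ x, ν.rnDeriv μ x ^ (p + 1) ∂μ) / M ^ p := by
      gcongr
      exact lintegral_min_one_rnDeriv_le_inf_univ μ ν

end MeasureTheory.Measure

/-- If `μ₁, μ₂` are probability measures with `μ₂ ≪ μ₁` and the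
Radon–Nikodym derivative satisfies `∫ (dμ₂/dμ₁)^(p+1) dμ₁ ≤ C` for some `p > 1`, `C > 1`,
then the total mass of the infimum measure satisfies
`(μ₁ ⊓ μ₂)(E) ≥ (1 - 1/p) (1/(pC))^(1/(p-1))`. -/
theorem overlap_lower_bound_of_moment {E : Type*} [MeasurableSpace E]
    (μ₁ μ₂ : Measure E) [IsProbabilityMeasure μ₁] [IsProbabilityMeasure μ₂]
    (hac : μ₂ ≪ μ₁) (p C : ℝ) (hp : 1 < p) (hC : 1 < C)
    (hmom : ∫⁻ x, (μ₂.rnDeriv μ₁ x) ^ (p + 1) ∂μ₁ ≤ ENNReal.ofReal C) :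
    ENNReal.ofReal ((1 - 1 / p) * (1 / (p * C)) ^ (1 / (p - 1))) ≤ (μ₁ ⊓ μ₂) Set.univ := by
  set m := (p * C) ^ (1 / (p - 1))
  have hpC : 1 ≤ p * C := by nlinarith
  have hm : 1 ≤ m := Real.one_le_rpow hpC (by simp [hp.le])
  have hmp : p * C ≤ m ^ p := by
    rw [← Real.rpow_mul (by positivity)]
    refine Real.self_le_rpow_of_one_le hpC ?_
    rw [one_div_mul_eq_div, one_le_div (by linarith)]
    linarith
  have hC_div : ENNReal.ofReal C / ENNReal.ofReal m ^ p ≤ ENNReal.ofReal (1 / p) := by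
    rw [ofReal_rpow_of_pos (by positivity), ← ofReal_div_of_pos (by positivity)]
    apply ofReal_le_ofReal
    rw [div_le_div_iff₀ (by positivity) (by positivity)]
    linarith
  have hmass := Measure.measure_univ_le_mul_inf_add_lintegral_rnDeriv_rpow_div hac
    (one_le_ofReal.2 hm) (p := p) (by linarith)
  rw [measure_univ] at hmass
  have hmI : ENNReal.ofReal (1 - 1 / p) ≤ ENNReal.ofReal m * (μ₁ ⊓ μ₂) Set.univ := by
    rw [ofReal_sub _ (by positivity), ofReal_one, tsub_le_iff_right]
    refine hmass.trans (add_le_add_right (le_trans ?_ hC_div) _)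
    gcongr
  rw [Real.div_rpow zero_le_one (by positivity), Real.one_rpow, mul_one_div,
    ofReal_div_of_pos (by positivity)]
  exact div_le_of_le_mul' hmI
end

section
/- Let E be a standard Borel space, let ν be a probability measure on E × E with second marginal ν₂, and let λ be a probability measure on E. Then there exists a probability measure ρ on E × E × E such that the joint law of the first and third coordinates under ρ equals ν, and the joint law of the second and third coordinates under ρ is a maximal coupling of (λ, ν₂), i.e., a coupling π of (λ, ν₂) with π({(a, b) : a ≠ b}) = 1 − (λ ⊓ ν₂)(E). -/
/-!
The common part `λ ⊓ ν₂` is put on the diagonal; the residuals `λ - λ ⊓ ν₂` and `ν₂ - λ ⊓ ν₂`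
are mutually singular, so their normalised product charges only the off-diagonal, and the sum is
a coupling of `(λ, ν₂)` whose off-diagonal mass is `1 - (λ ⊓ ν₂)(E)`. This coupling `π` is glued
to `ν` along the common marginal `ν₂`: draw `(b, c)` from `π` and then `a` from the conditional
law of the first coordinate of `ν` given the second one equals `c`, which exists since `E` is
standard Borel.
-/

open MeasureTheory ProbabilityTheory Set

namespace MeasureTheory.Measure

section MaximalCoupling

variable {E : Type*} [MeasurableSpace E]

lemma mutuallySingular_sub_inf (μ₁ μ₂ : Measure E) [IsFiniteMeasure μ₁] :
    (μ₁ - μ₁ ⊓ μ₂) ⟂ₘ (μ₂ - μ₁ ⊓ μ₂) := by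
  have : IsFiniteMeasure (μ₁ ⊓ μ₂) := isFiniteMeasure_of_le μ₁ inf_le_left
  refine mutuallySingular_of_disjoint fun χ h₁ h₂ =>
    show χ ≤ 0 from le_of_add_le_add_left (μ := μ₁ ⊓ μ₂) ?_
  rw [add_zero]
  refine le_inf ?_ ?_
  · calc μ₁ ⊓ μ₂ + χ ≤ μ₁ ⊓ μ₂ + (μ₁ - μ₁ ⊓ μ₂) := add_le_add_right h₁ _
      _ = μ₁ := by rw [add_comm, sub_add_cancel_of_le inf_le_left]
  · calc μ₁ ⊓ μ₂ + χ ≤ μ₁ ⊓ μ₂ + (μ₂ - μ₁ ⊓ μ₂) := add_le_add_right h₂ _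
      _ = μ₂ := by rw [add_comm, sub_add_cancel_of_le inf_le_right]

lemma MutuallySingular.prod_diagonal_eq_zero {ξ η : Measure E} [SFinite η] (h : ξ ⟂ₘ η) :
    ξ.prod η (diagonal E) = 0 := by
  have hcover : diagonal E ⊆ h.nullSet ×ˢ univ ∪ univ ×ˢ h.nullSetᶜ := by
    rintro ⟨a, b⟩ (rfl : a = b)
    by_cases ha : a ∈ h.nullSet <;> simp [ha]
  refine measure_mono_null hcover (measure_union_null ?_ ?_)
  · rw [prod_prod, h.measure_nullSet, zero_mul]
  · rw [prod_prod, h.measure_compl_nullSet, mul_zero]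

lemma inv_measure_univ_smul_measure_univ_smul (ξ : Measure E) [IsFiniteMeasure ξ] :
    (ξ univ)⁻¹ • ξ univ • ξ = ξ := by
  rw [smul_smul]
  rcases eq_or_ne (ξ univ) 0 with h | h
  · simp [measure_univ_eq_zero.mp h]
  · rw [ENNReal.inv_mul_cancel h (measure_ne_top _ _), one_smul]

noncomputable def maximalCoupling (μ₁ μ₂ : Measure E) : Measure (E × E) :=
  (μ₁ ⊓ μ₂).map Function.diag +
    ((μ₁ - μ₁ ⊓ μ₂) univ)⁻¹ • (μ₁ - μ₁ ⊓ μ₂).prod (μ₂ - μ₁ ⊓ μ₂)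

variable {μ₁ μ₂ : Measure E} [IsFiniteMeasure μ₁]

lemma sub_inf_apply_univ_eq (h : μ₁ univ = μ₂ univ) :
    (μ₁ - μ₁ ⊓ μ₂) univ = (μ₂ - μ₁ ⊓ μ₂) univ := by
  have : IsFiniteMeasure (μ₁ ⊓ μ₂) := isFiniteMeasure_of_le μ₁ inf_le_left
  rw [sub_apply .univ inf_le_left, sub_apply .univ inf_le_right, h]

lemma map_fst_maximalCoupling [IsFiniteMeasure μ₂] (h : μ₁ univ = μ₂ univ) :
    (maximalCoupling μ₁ μ₂).map Prod.fst = μ₁ := by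
  have : IsFiniteMeasure (μ₁ ⊓ μ₂) := isFiniteMeasure_of_le μ₁ inf_le_left
  rw [maximalCoupling, Measure.map_add _ _ measurable_fst, Measure.map_smul, map_fst_prod,
    ← sub_inf_apply_univ_eq h, inv_measure_univ_smul_measure_univ_smul,
    map_map measurable_fst measurable_diag]
  simp only [Function.comp_def, Function.diag, map_id']
  exact add_comm _ _ |>.trans (sub_add_cancel_of_le inf_le_left)

lemma map_snd_maximalCoupling [IsFiniteMeasure μ₂] (h : μ₁ univ = μ₂ univ) :
    (maximalCoupling μ₁ μ₂).map Prod.snd = μ₂ := by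
  have : IsFiniteMeasure (μ₁ ⊓ μ₂) := isFiniteMeasure_of_le μ₁ inf_le_left
  rw [maximalCoupling, Measure.map_add _ _ measurable_snd, Measure.map_smul, map_snd_prod,
    sub_inf_apply_univ_eq h, inv_measure_univ_smul_measure_univ_smul,
    map_map measurable_snd measurable_diag]
  simp only [Function.comp_def, Function.diag, map_id']
  exact add_comm _ _ |>.trans (sub_add_cancel_of_le inf_le_right)

instance [IsProbabilityMeasure μ₁] [IsProbabilityMeasure μ₂] :
    IsProbabilityMeasure (maximalCoupling μ₁ μ₂) :=
  have : IsProbabilityMeasure ((maximalCoupling μ₁ μ₂).map Prod.fst) := by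
    rwa [map_fst_maximalCoupling (by simp)]
  isProbabilityMeasure_of_map Prod.fst

lemma maximalCoupling_compl_diagonal [MeasurableEq E] [IsFiniteMeasure μ₂] (h : μ₁ univ = μ₂ univ) :
    maximalCoupling μ₁ μ₂ (diagonal E)ᶜ = μ₁ univ - (μ₁ ⊓ μ₂) univ := by
  have : IsFiniteMeasure (μ₁ ⊓ μ₂) := isFiniteMeasure_of_le μ₁ inf_le_left
  have hdiag : Function.diag ⁻¹' (diagonal E)ᶜ = ∅ := by ext; simp
  rw [maximalCoupling, add_apply, smul_apply, smul_eq_mul,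
    map_apply measurable_diag measurableSet_diagonal.compl, hdiag, measure_empty, zero_add,
    measure_compl measurableSet_diagonal (measure_ne_top _ _),
    (mutuallySingular_sub_inf μ₁ μ₂).prod_diagonal_eq_zero, tsub_zero, ← univ_prod_univ,
    prod_prod, ← sub_inf_apply_univ_eq h, ENNReal.inv_mul_cancel_left' id
      (fun h => absurd h (measure_ne_top _ _)), sub_apply .univ inf_le_left]

end MaximalCoupling

section Gluing

variable {α β γ : Type*} [MeasurableSpace α] [MeasurableSpace β] [MeasurableSpace γ]

lemma map_compProd_prodMkRight (σ : Measure (γ × β)) [SFinite σ] (κ : Kernel γ α)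
    [IsSFiniteKernel κ] :
    (σ ⊗ₘ κ.prodMkRight β).map (fun q => (q.1.1, q.2)) = σ.map Prod.fst ⊗ₘ κ := by
  ext s hs
  have hf : Measurable fun q : (γ × β) × α => (q.1.1, q.2) := by fun_prop
  rw [map_apply hf hs, compProd_apply (hs.preimage hf), compProd_apply hs,
    lintegral_map (κ.measurable_kernel_prodMk_left hs) measurable_fst]
  rfl

variable [StandardBorelSpace α] [Nonempty α]

noncomputable def glue (ν : Measure (α × γ)) [IsFiniteMeasure ν] (π : Measure (β × γ)) :
    Measure (α × β × γ) :=
  (π.map Prod.swap ⊗ₘ (ν.map Prod.swap).condKernel.prodMkRight β).map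
    fun q => (q.2, q.1.2, q.1.1)

instance (ν : Measure (α × γ)) [IsFiniteMeasure ν] (π : Measure (β × γ))
    [IsProbabilityMeasure π] : IsProbabilityMeasure (glue ν π) :=
  have : IsProbabilityMeasure (π.map Prod.swap) := isProbabilityMeasure_map (by fun_prop)
  isProbabilityMeasure_map (by fun_prop)

variable (ν : Measure (α × γ)) [IsFiniteMeasure ν] (π : Measure (β × γ)) [SFinite π]

lemma map_glue_eq_left (h : π.snd = ν.snd) :
    (glue ν π).map (fun p => (p.1, p.2.2)) = ν := by
  have hcomp : ((fun p : α × β × γ => (p.1, p.2.2)) ∘ fun q : (γ × β) × α => (q.2, q.1.2, q.1.1))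
      = Prod.swap ∘ fun q => (q.1.1, q.2) := rfl
  rw [glue, map_map (by fun_prop) (by fun_prop), hcomp, ← map_map measurable_swap (by fun_prop),
    map_compProd_prodMkRight, ← fst, fst_map_swap, h, ← fst_map_swap, disintegrate,
    map_map measurable_swap measurable_swap, Prod.swap_swap_eq, map_id]

lemma map_glue_eq_right :
    (glue ν π).map (fun p => (p.2.1, p.2.2)) = π := by
  have hcomp : ((fun p : α × β × γ => (p.2.1, p.2.2)) ∘ fun q : (γ × β) × α => (q.2, q.1.2, q.1.1))
      = Prod.swap ∘ Prod.fst := rfl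
  rw [glue, map_map (by fun_prop) (by fun_prop), hcomp, ← map_map measurable_swap measurable_fst,
    ← fst, fst_compProd, map_map measurable_swap measurable_swap, Prod.swap_swap_eq, map_id]

end Gluing

end MeasureTheory.Measure

open Measure

/-- Given a probability measure `ν` on `E × E` (with second marginal `ν₂`)
and a probability measure `lam` on `E`, over a standard Borel space `E`, there is a
probability measure `ρ` on `E × E × E` whose (first, third)-marginal is `ν` and whose
(second, third)-marginal is a maximal coupling of `(lam, ν₂)`. -/
theorem coupling_extension {E : Type*} [MeasurableSpace E] [StandardBorelSpace E]
    (ν : Measure (E × E)) [IsProbabilityMeasure ν]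
    (lam : Measure E) [IsProbabilityMeasure lam] :
    ∃ ρ : Measure (E × E × E), IsProbabilityMeasure ρ ∧
      ρ.map (fun p => (p.1, p.2.2)) = ν ∧
      (ρ.map (fun p => (p.2.1, p.2.2))).map Prod.fst = lam ∧
      (ρ.map (fun p => (p.2.1, p.2.2))).map Prod.snd = ν.map Prod.snd ∧
      (ρ.map (fun p => (p.2.1, p.2.2))) {q : E × E | q.1 ≠ q.2}
        = 1 - (lam ⊓ ν.map Prod.snd) Set.univ := by
  have : Nonempty E := (nonempty_of_neZero ν).map Prod.fst
  have hmass : lam univ = ν.snd univ := by simp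
  set π := maximalCoupling lam ν.snd
  have hπ₂ : π.snd = ν.snd := map_snd_maximalCoupling hmass
  have hρ₁₃ := map_glue_eq_left ν π hπ₂
  have hρ₂₃ := map_glue_eq_right ν π
  refine ⟨glue ν π, inferInstance, hρ₁₃, ?_, ?_, ?_⟩
  · rw [hρ₂₃, map_fst_maximalCoupling hmass]
  · rw [hρ₂₃]
    exact hπ₂
  · rw [hρ₂₃, ← measure_univ (μ := lam)]
    exact maximalCoupling_compl_diagonal hmass
end

section
/- Let (Ω, ℱ, P) be a probability space with a filtration (ℱ_k)_{k ∈ ℕ}, and let (ξ_k)_{k ∈ ℕ} be a sequence of nonnegative integrable random variables such that ξ_k is ℱ_k-measurable for every k and E[ξ_{k+1} | ℱ_k] ≤ γ·ξ_k + κ almost surely for every k, where γ ≥ 0 and κ ≥ 0. Fix R > 0, set C_k = {ξ_k ≥ R} and B_k = ∩_{j=0}^{k} C_j, and let λ = γ + κ/R. Then for every k ≥ 1: E[ξ_k·1_{B_k}] ≤ λ^{k−1}·(γ·E[ξ_0] + κ) and P(B_k) ≤ λ^{k−1}·(γ·E[ξ_0] + κ)/R. -/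
/-!
Write `B_k = stayAbove ξ R k` for the event that `ξ_0, …, ξ_k` all stay `≥ R` and
`I_k = E[ξ_k 1_{B_k}]`. Since `B_{k+1} ⊆ B_k ∈ ℱ_k` and `ξ_{k+1} ≥ 0`, the drift condition gives
`I_{k+1} ≤ E[E[ξ_{k+1} | ℱ_k] 1_{B_k}] ≤ γ I_k + κ P(B_k)`, and Markov's inequality on `B_k`
gives `R P(B_k) ≤ I_k`. Hence `I_1 ≤ γ E[ξ_0] + κ` and `I_{k+1} ≤ (γ + κ/R) I_k`, and the
bound on `P(B_k)` follows by Markov once more.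
-/

open MeasureTheory

section

variable {Ω : Type*} {m0 : MeasurableSpace Ω}

theorem setIntegral_le_of_condExp_le {μ : Measure Ω} [IsFiniteMeasure μ]
    {m : MeasurableSpace Ω} (hm : m ≤ m0) {f g : Ω → ℝ} (hf : Integrable f μ)
    (hg : Integrable g μ) {γ κ : ℝ}
    (hfg : ∀ᵐ ω ∂μ, (μ[f | m]) ω ≤ γ * g ω + κ) {s : Set Ω} (hs : MeasurableSet[m] s) :
    ∫ ω in s, f ω ∂μ ≤ γ * ∫ ω in s, g ω ∂μ + κ * μ.real s :=
  calc ∫ ω in s, f ω ∂μ = ∫ ω in s, (μ[f | m]) ω ∂μ := (setIntegral_condExp hm hf hs).symm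
    _ ≤ ∫ ω in s, (γ * g ω + κ) ∂μ :=
      setIntegral_mono_ae integrable_condExp.integrableOn
        ((hg.const_mul γ).add (integrable_const κ)).integrableOn hfg
    _ = γ * ∫ ω in s, g ω ∂μ + κ * μ.real s := by
      rw [integral_add (hg.const_mul γ).integrableOn (integrable_const κ), integral_const_mul,
        setIntegral_const, smul_eq_mul]
      ring

def stayAbove (ξ : ℕ → Ω → ℝ) (R : ℝ) (k : ℕ) : Set Ω := {ω | ∀ j ≤ k, R ≤ ξ j ω}

variable {ξ : ℕ → Ω → ℝ} {R : ℝ}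

theorem stayAbove_succ_subset (k : ℕ) : stayAbove ξ R (k + 1) ⊆ stayAbove ξ R k :=
  fun _ hω j hj => hω j (Nat.le_succ_of_le hj)

theorem measurableSet_stayAbove {ℱ : Filtration ℕ m0} (hξ : StronglyAdapted ℱ ξ) (k : ℕ) :
    MeasurableSet[ℱ k] (stayAbove ξ R k) := by
  simp only [stayAbove, Set.ofPred_forall]
  exact .iInter fun j => .iInter fun hj =>
    measurableSet_le measurable_const ((hξ j).measurable.mono (ℱ.mono hj) le_rfl)

variable {ℱ : Filtration ℕ m0} {μ : Measure Ω} {γ κ : ℝ} {k : ℕ}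

theorem mul_measureReal_stayAbove_le [IsFiniteMeasure μ] (hξ : StronglyAdapted ℱ ξ)
    (hint : Integrable (ξ k) μ) :
    R * μ.real (stayAbove ξ R k) ≤ ∫ ω in stayAbove ξ R k, ξ k ω ∂μ :=
  setIntegral_ge_of_const_le_real (ℱ.le k _ (measurableSet_stayAbove hξ k))
    (measure_ne_top μ _) (fun _ hω => hω k le_rfl) hint.integrableOn

theorem setIntegral_stayAbove_succ_le [IsFiniteMeasure μ] (hξ : StronglyAdapted ℱ ξ)
    (hint : ∀ k, Integrable (ξ k) μ) (hnonneg : 0 ≤ ξ (k + 1))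
    (hrec : ∀ᵐ ω ∂μ, (μ[ξ (k + 1) | ℱ k]) ω ≤ γ * ξ k ω + κ) :
    ∫ ω in stayAbove ξ R (k + 1), ξ (k + 1) ω ∂μ
      ≤ γ * ∫ ω in stayAbove ξ R k, ξ k ω ∂μ + κ * μ.real (stayAbove ξ R k) :=
  calc ∫ ω in stayAbove ξ R (k + 1), ξ (k + 1) ω ∂μ
      ≤ ∫ ω in stayAbove ξ R k, ξ (k + 1) ω ∂μ :=
        setIntegral_mono_set (hint (k + 1)).integrableOn (.of_forall hnonneg)
          (.of_forall (stayAbove_succ_subset k))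
    _ ≤ _ := setIntegral_le_of_condExp_le (ℱ.le k) (hint (k + 1)) (hint k) hrec
        (measurableSet_stayAbove hξ k)

theorem setIntegral_stayAbove_succ_le_mul [IsFiniteMeasure μ] (hR : 0 < R) (hκ : 0 ≤ κ)
    (hξ : StronglyAdapted ℱ ξ) (hint : ∀ k, Integrable (ξ k) μ) (hnonneg : 0 ≤ ξ (k + 1))
    (hrec : ∀ᵐ ω ∂μ, (μ[ξ (k + 1) | ℱ k]) ω ≤ γ * ξ k ω + κ) :
    ∫ ω in stayAbove ξ R (k + 1), ξ (k + 1) ω ∂μ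
      ≤ (γ + κ / R) * ∫ ω in stayAbove ξ R k, ξ k ω ∂μ := by
  have hmarkov : κ * μ.real (stayAbove ξ R k) ≤ κ / R * ∫ ω in stayAbove ξ R k, ξ k ω ∂μ :=
    calc κ * μ.real (stayAbove ξ R k) = κ / R * (R * μ.real (stayAbove ξ R k)) := by
          field_simp
      _ ≤ _ := by gcongr; exact mul_measureReal_stayAbove_le hξ (hint k)
  linarith [setIntegral_stayAbove_succ_le (R := R) hξ hint hnonneg hrec]

theorem setIntegral_stayAbove_le [IsProbabilityMeasure μ] (hR : 0 < R) (hγ : 0 ≤ γ)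
    (hκ : 0 ≤ κ) (hξ : StronglyAdapted ℱ ξ) (hint : ∀ k, Integrable (ξ k) μ)
    (hnonneg : ∀ k, 0 ≤ ξ k)
    (hrec : ∀ k, ∀ᵐ ω ∂μ, (μ[ξ (k + 1) | ℱ k]) ω ≤ γ * ξ k ω + κ) (n : ℕ) :
    ∫ ω in stayAbove ξ R (n + 1), ξ (n + 1) ω ∂μ
      ≤ (γ + κ / R) ^ n * (γ * ∫ ω, ξ 0 ω ∂μ + κ) := by
  induction n with
  | zero =>
    have hint0 : ∫ ω in stayAbove ξ R 0, ξ 0 ω ∂μ ≤ ∫ ω, ξ 0 ω ∂μ :=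
      setIntegral_le_integral (hint 0) (.of_forall (hnonneg 0))
    calc _ ≤ γ * ∫ ω in stayAbove ξ R 0, ξ 0 ω ∂μ + κ * μ.real (stayAbove ξ R 0) :=
          setIntegral_stayAbove_succ_le hξ hint (hnonneg 1) (hrec 0)
      _ ≤ γ * ∫ ω, ξ 0 ω ∂μ + κ * 1 := by gcongr; exact measureReal_le_one
      _ = _ := by ring
  | succ n ih =>
    calc _ ≤ (γ + κ / R) * ∫ ω in stayAbove ξ R (n + 1), ξ (n + 1) ω ∂μ :=
          setIntegral_stayAbove_succ_le_mul hR hκ hξ hint (hnonneg _) (hrec _)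
      _ ≤ (γ + κ / R) * ((γ + κ / R) ^ n * (γ * ∫ ω, ξ 0 ω ∂μ + κ)) := by gcongr
      _ = _ := by ring

end

/-- Let `(ξ_k)` be nonnegative integrable random variables adapted to a
filtration `(ℱ_k)` with `E[ξ_{k+1} | ℱ_k] ≤ γ ξ_k + κ` a.s. For `R > 0`, letting
`B_k = ∩_{j ≤ k} {ξ_j ≥ R}` and `λ = γ + κ/R`, one has for every `k ≥ 1`:
`E[ξ_k 1_{B_k}] ≤ λ^{k-1} (γ E[ξ_0] + κ)` and `P(B_k) ≤ λ^{k-1} (γ E[ξ_0] + κ)/R`. -/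
theorem return_time_iteration {Ω : Type*} {m0 : MeasurableSpace Ω}
    (μ : Measure Ω) [IsProbabilityMeasure μ]
    (ℱ : Filtration ℕ m0)
    (ξ : ℕ → Ω → ℝ)
    (hadapted : ∀ k, StronglyMeasurable[ℱ k] (ξ k))
    (hint : ∀ k, Integrable (ξ k) μ)
    (hnonneg : ∀ k ω, 0 ≤ ξ k ω)
    (γ κ : ℝ) (hγ : 0 ≤ γ) (hκ : 0 ≤ κ)
    (hrec : ∀ k, ∀ᵐ ω ∂μ, (μ[ξ (k + 1) | ℱ k]) ω ≤ γ * ξ k ω + κ)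
    (R : ℝ) (hR : 0 < R) :
    ∀ k : ℕ, 1 ≤ k →
      (∫ ω, Set.indicator {ω | ∀ j ≤ k, R ≤ ξ j ω} (ξ k) ω ∂μ
          ≤ (γ + κ / R) ^ (k - 1) * (γ * (∫ ω, ξ 0 ω ∂μ) + κ)) ∧
      μ {ω | ∀ j ≤ k, R ≤ ξ j ω}
          ≤ ENNReal.ofReal ((γ + κ / R) ^ (k - 1) * (γ * (∫ ω, ξ 0 ω ∂μ) + κ) / R) := by
  intro k hk
  obtain ⟨n, rfl⟩ : ∃ n, k = n + 1 := ⟨k - 1, (Nat.sub_add_cancel hk).symm⟩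
  have hB : MeasurableSet (stayAbove ξ R (n + 1)) :=
    ℱ.le _ _ (measurableSet_stayAbove hadapted _)
  have hbound := setIntegral_stayAbove_le hR hγ hκ hadapted hint hnonneg hrec n
  refine ⟨(integral_indicator hB).trans_le hbound, ?_⟩
  have hmarkov := mul_measureReal_stayAbove_le (R := R) (ℱ := ℱ) hadapted (hint (n + 1))
  calc μ (stayAbove ξ R (n + 1)) = ENNReal.ofReal (μ.real (stayAbove ξ R (n + 1))) :=
        (ofReal_measureReal (measure_ne_top μ _)).symm
    _ ≤ _ := by
      rw [Nat.add_sub_cancel]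
      gcongr
      rw [le_div_iff₀ hR]
      linarith
end
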